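/- arXiv:cs/0603034 — 2 statements merged into one kernel-verified Lean document; each statement's English description precedes it below -/
import Mathlib

section
/- In the basic multimodal logic K over a finite set of actions, a Kripke model M globally satisfies an action theory T = ⟨S, E, X, I⟩ with dependence relation ⇝ and M is the big model for T (worlds = all valuations of S, and R_a relates w to w' iff every effect or inexecutability law A → [a]C in E ∪ I with w ⊨ A has w' ⊨ C, subject to the ⇝-frame conditions) if and only if T satisfies Postulate PS: every classical (non-modal) formula φ that is a global dependence-based consequence of S ∪ E ∪ X ∪ I is already a classical consequence of S alone. -/
/-! Classical propositional formulas. -/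
inductive PForm (α : Type) : Type
  | atom : α → PForm α
  | fls  : PForm α
  | not  : PForm α → PForm α
  | and  : PForm α → PForm α → PForm α
  | or   : PForm α → PForm α → PForm α
  | imp  : PForm α → PForm α → PForm α

def PForm.Sat {α : Type} (v : α → Prop) : PForm α → Prop
  | atom p => v p
  | fls => False
  | not φ => ¬ Sat v φ
  | and φ ψ => Sat v φ ∧ Sat v ψ
  | or φ ψ => Sat v φ ∨ Sat v ψ
  | imp φ ψ => Sat v φ → Sat v ψ

/-- Classical (propositional) global consequence. -/
def EntailsCl {α : Type} (Γ : Set (PForm α)) (φ : PForm α) : Prop :=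
  ∀ v : α → Prop, (∀ ψ ∈ Γ, PForm.Sat v ψ) → PForm.Sat v φ

/-- Multimodal formulas with one box per action. -/
inductive MForm (Act α : Type) : Type
  | atom : α → MForm Act α
  | fls  : MForm Act α
  | not  : MForm Act α → MForm Act α
  | and  : MForm Act α → MForm Act α → MForm Act α
  | or   : MForm Act α → MForm Act α → MForm Act α
  | imp  : MForm Act α → MForm Act α → MForm Act α
  | box  : Act → MForm Act α → MForm Act α

def PForm.toM {Act α : Type} : PForm α → MForm Act α
  | .atom p => .atom p
  | .fls => .fls
  | .not φ => .not φ.toM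
  | .and φ ψ => .and φ.toM ψ.toM
  | .or φ ψ => .or φ.toM ψ.toM
  | .imp φ ψ => .imp φ.toM ψ.toM

/-- A Kripke model for multimodal K. -/
structure KModel (Act α : Type) where
  W : Type
  R : Act → W → W → Prop
  V : W → α → Prop

def MForm.Sat {Act α : Type} (M : KModel Act α) : M.W → MForm Act α → Prop
  | w, atom p => M.V w p
  | _, fls => False
  | w, not φ => ¬ Sat M w φ
  | w, and φ ψ => Sat M w φ ∧ Sat M w ψ
  | w, or φ ψ => Sat M w φ ∨ Sat M w ψ
  | w, imp φ ψ => Sat M w φ → Sat M w ψ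
  | w, box a φ => ∀ w', M.R a w w' → Sat M w' φ

/-- Global truth in a model. -/
def Glob {Act α : Type} (M : KModel Act α) (Φ : MForm Act α) : Prop :=
  ∀ w : M.W, MForm.Sat M w Φ

/-- Global consequence in multimodal K. -/
def ConsK {Act α : Type} (Γ : Set (MForm Act α)) (Φ : MForm Act α) : Prop :=
  ∀ M : KModel Act α, (∀ Ψ ∈ Γ, Glob M Ψ) → Glob M Φ

/-- Literals. -/
abbrev Lit (α : Type) := α × Bool

def Lit.Sat {α : Type} (v : α → Prop) (l : Lit α) : Prop :=
  if l.2 then v l.1 else ¬ v l.1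

/-- A dependence relation `⇝ ⊆ Act × Lit`. -/
abbrev Dep (Act α : Type) := Act → Lit α → Prop

/-- `⇝`-models: along `R a`, literals independent of `a` persist. -/
def IsDepModel {Act α : Type} (dep : Dep Act α) (M : KModel Act α) : Prop :=
  ∀ (a : Act) (w w' : M.W), M.R a w w' → ∀ p : α,
    (¬ dep a (p, true) → ¬ M.V w p → ¬ M.V w' p) ∧
    (¬ dep a (p, false) → M.V w p → M.V w' p)

/-- Dependence-based global consequence. -/
def ConsDep {Act α : Type} (dep : Dep Act α) (Γ : Set (MForm Act α)) (Φ : MForm Act α) : Prop :=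
  ∀ M : KModel Act α, IsDepModel dep M → (∀ Ψ ∈ Γ, Glob M Ψ) → Glob M Φ

/-- An action theory: static laws `S`, effect laws `E` (antecedent/consequent
pairs), executability laws `X` (antecedents), inexecutability laws `I`
(antecedents). -/
structure ActionTheory (Act α : Type) where
  S : Set (PForm α)
  E : Act → Set (PForm α × PForm α)
  X : Act → Set (PForm α)
  I : Act → Set (PForm α)

/-- `⟨a⟩Φ`. -/
def MForm.diam {Act α : Type} (a : Act) (Φ : MForm Act α) : MForm Act α :=
  .not (.box a (.not Φ))

/-- Effect law `A → [a]C`. -/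
def effLaw {Act α : Type} (a : Act) (e : PForm α × PForm α) : MForm Act α :=
  .imp e.1.toM (.box a e.2.toM)

/-- Executability law `A → ⟨a⟩⊤`. -/
def exeLaw {Act α : Type} (a : Act) (A : PForm α) : MForm Act α :=
  .imp A.toM (MForm.diam a (.not .fls))

/-- Inexecutability law `A → [a]⊥`. -/
def inexLaw {Act α : Type} (a : Act) (A : PForm α) : MForm Act α :=
  .imp A.toM (.box a .fls)

variable {Act α : Type}

def staticForms (T : ActionTheory Act α) : Set (MForm Act α) := PForm.toM '' T.S
def effForms (T : ActionTheory Act α) (a : Act) : Set (MForm Act α) := effLaw a '' T.E a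
def exeForms (T : ActionTheory Act α) (a : Act) : Set (MForm Act α) := exeLaw a '' T.X a
def inexForms (T : ActionTheory Act α) (a : Act) : Set (MForm Act α) := inexLaw a '' T.I a

/-- The action theory of the single action `a`:  `S ∪ E_a ∪ X_a ∪ I_a`. -/
def formsFor (T : ActionTheory Act α) (a : Act) : Set (MForm Act α) :=
  staticForms T ∪ effForms T a ∪ exeForms T a ∪ inexForms T a

/-- The whole action theory:  `S ∪ E ∪ X ∪ I`. -/
def allForms (T : ActionTheory Act α) : Set (MForm Act α) :=
  staticForms T ∪ (⋃ a, effForms T a) ∪ (⋃ a, exeForms T a) ∪ (⋃ a, inexForms T a)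

/-- Postulate PS for action `a`: no implicit static laws. -/
def PS (T : ActionTheory Act α) (dep : Dep Act α) (a : Act) : Prop :=
  ∀ φ : PForm α, ConsDep dep (formsFor T a) φ.toM → EntailsCl T.S φ

/-- Postulate PS*: no implicit static laws for the whole theory. -/
def PSstar (T : ActionTheory Act α) (dep : Dep Act α) : Prop :=
  ∀ φ : PForm α, ConsDep dep (allForms T) φ.toM → EntailsCl T.S φ

/-- Postulate PI for action `a`: no implicit inexecutability laws. -/
def PIpost (T : ActionTheory Act α) (dep : Dep Act α) (a : Act) : Prop :=
  ∀ A : PForm α, ConsDep dep (formsFor T a) (inexLaw a A) →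
    ConsK (staticForms T ∪ inexForms T a) (inexLaw a A)

/-- Postulate PI*: no implicit inexecutability laws for the whole theory. -/
def PIstar (T : ActionTheory Act α) (dep : Dep Act α) : Prop :=
  ∀ (a : Act) (A : PForm α), ConsDep dep (allForms T) (inexLaw a A) →
    ConsK (staticForms T ∪ ⋃ a', inexForms T a') (inexLaw a A)

/-- The big model for a theory and a dependence relation: worlds are all
valuations of `S`; `R a` is maximal compatible with `E ∪ I` and `⇝`. -/
def bigModel (T : ActionTheory Act α) (dep : Dep Act α) : KModel Act α where
  W := {v : α → Prop // ∀ φ ∈ T.S, PForm.Sat v φ}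
  R a w w' :=
    (∀ e ∈ T.E a, PForm.Sat w.1 e.1 → PForm.Sat w'.1 e.2) ∧
    (∀ A ∈ T.I a, ¬ PForm.Sat w.1 A) ∧
    (∀ p : α, (¬ dep a (p, true) → ¬ w.1 p → ¬ w'.1 p) ∧
              (¬ dep a (p, false) → w.1 p → w'.1 p))
  V w p := w.1 p

/-!
The big model always satisfies the static, effect and inexecutability laws, and it is a
`⇝`-model; so it is a model of the theory exactly when it satisfies the executability laws.
If it does, every classical consequence holds in it, hence in every valuation of `S`: PS.
Conversely, under PS each valuation `w` of `S` is realised at a world `u` of some `⇝`-model of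
the theory, for otherwise `¬ w` (via its characteristic formula; `α` is finite) would be an
implicit static law. An executability law true at `w` gives `u` an `a`-successor `u'`, and the
valuation of `u'` is an `a`-successor of `w` in the big model, whose relations are maximal.
-/

theorem PForm.sat_toM (M : KModel Act α) (w : M.W) (φ : PForm α) :
    MForm.Sat M w φ.toM ↔ PForm.Sat (M.V w) φ := by
  induction φ <;> simp [PForm.toM, MForm.Sat, PForm.Sat, *]

def PForm.top : PForm α := .not .fls

def PForm.conj : List (PForm α) → PForm α
  | [] => .top
  | φ :: l => .and φ (conj l)

theorem PForm.sat_conj (v : α → Prop) (l : List (PForm α)) :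
    PForm.Sat v (conj l) ↔ ∀ φ ∈ l, PForm.Sat v φ := by
  induction l with
  | nil => simp [conj, top, PForm.Sat]
  | cons φ l ih => simp [conj, PForm.Sat, ih]

open Classical in
noncomputable def PForm.lit (v : α → Prop) (p : α) : PForm α :=
  if v p then .atom p else .not (.atom p)

theorem PForm.sat_lit (u v : α → Prop) (p : α) :
    PForm.Sat u (lit v p) ↔ (u p ↔ v p) := by
  by_cases h : v p <;> simp [lit, h, PForm.Sat]

noncomputable def PForm.charForm [Fintype α] (v : α → Prop) : PForm α :=
  conj ((Finset.univ : Finset α).toList.map (lit v))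

theorem PForm.sat_charForm_iff [Fintype α] (u v : α → Prop) :
    PForm.Sat u (charForm v) ↔ u = v := by
  simp [charForm, sat_conj, sat_lit, funext_iff]

section BigModel

variable {T : ActionTheory Act α} {dep : Dep Act α}

theorem bigModel_isDepModel : IsDepModel dep (bigModel T dep) :=
  fun _ _ _ hR p => hR.2.2 p

theorem glob_bigModel_staticForms {Φ : MForm Act α} (hΦ : Φ ∈ staticForms T) :
    Glob (bigModel T dep) Φ := by
  obtain ⟨φ, hφ, rfl⟩ := hΦ
  exact fun w => (PForm.sat_toM _ w φ).2 (w.2 φ hφ)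

theorem glob_bigModel_effForms {a : Act} {Φ : MForm Act α} (hΦ : Φ ∈ effForms T a) :
    Glob (bigModel T dep) Φ := by
  obtain ⟨e, he, rfl⟩ := hΦ
  intro w hA w' hR
  rw [PForm.sat_toM] at hA ⊢
  exact hR.1 e he hA

theorem glob_bigModel_inexForms {a : Act} {Φ : MForm Act α} (hΦ : Φ ∈ inexForms T a) :
    Glob (bigModel T dep) Φ := by
  obtain ⟨A, hA, rfl⟩ := hΦ
  intro w hAw _ hR
  exact hR.2.1 A hA ((PForm.sat_toM _ w A).1 hAw)

variable {M : KModel Act α}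

def toBigModel (hM : ∀ Φ ∈ allForms T, Glob M Φ) (u : M.W) : (bigModel T dep).W :=
  ⟨M.V u, fun φ hφ => (PForm.sat_toM M u φ).1 (hM _ (Or.inl (Or.inl (Or.inl ⟨φ, hφ, rfl⟩))) u)⟩

theorem bigModel_R_toBigModel (hdep : IsDepModel dep M) (hM : ∀ Φ ∈ allForms T, Glob M Φ)
    {a : Act} {u u' : M.W} (hR : M.R a u u') :
    (bigModel T dep).R a (toBigModel hM u) (toBigModel hM u') := by
  refine ⟨fun e he hA => ?_, fun A hA hAu => ?_, hdep a u u' hR⟩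
  · have hlaw := hM (effLaw a e) (Or.inl (Or.inl (Or.inr (Set.mem_iUnion.2 ⟨a, e, he, rfl⟩)))) u
    exact (PForm.sat_toM M u' e.2).1 (hlaw ((PForm.sat_toM M u e.1).2 hA) u' hR)
  · have hlaw := hM (inexLaw a A) (Or.inr (Set.mem_iUnion.2 ⟨a, A, hA, rfl⟩)) u
    exact hlaw ((PForm.sat_toM M u A).2 hAu) u' hR

theorem exists_toBigModel_eq [Fintype α] (hPS : PSstar T dep) (w : (bigModel T dep).W) :
    ∃ (M : KModel Act α) (_ : IsDepModel dep M) (hM : ∀ Φ ∈ allForms T, Glob M Φ) (u : M.W),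
      toBigModel hM u = w := by
  by_contra! hnone
  have hcons : ConsDep dep (allForms T) (PForm.not (PForm.charForm w.1)).toM := by
    intro M hdep hM u hu
    rw [PForm.sat_toM, PForm.sat_charForm_iff] at hu
    exact hnone M hdep hM u (Subtype.ext hu)
  exact hPS _ hcons w.1 w.2 ((PForm.sat_charForm_iff _ _).2 rfl)

theorem glob_bigModel_exeForms [Fintype α] (hPS : PSstar T dep) {a : Act} {Φ : MForm Act α}
    (hΦ : Φ ∈ exeForms T a) : Glob (bigModel T dep) Φ := by
  obtain ⟨A, hAX, rfl⟩ := hΦ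
  intro w hA hnosucc
  obtain ⟨M, hdep, hM, u, rfl⟩ := exists_toBigModel_eq hPS w
  have hexe := hM (exeLaw a A) (Or.inl (Or.inr (Set.mem_iUnion.2 ⟨a, A, hAX, rfl⟩))) u
  rw [PForm.sat_toM] at hA
  apply hexe ((PForm.sat_toM M u A).2 hA)
  intro u' hR _
  exact hnosucc _ (bigModel_R_toBigModel hdep hM hR) id

end BigModel

theorem stmt_6_general [Fintype α] (T : ActionTheory Act α) (dep : Dep Act α) :
    (∀ Φ ∈ allForms T, Glob (bigModel T dep) Φ) ↔ PSstar T dep := by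
  constructor
  · intro hbig φ hcons v hv
    exact (PForm.sat_toM (bigModel T dep) ⟨v, hv⟩ φ).1 (hcons _ bigModel_isDepModel hbig _)
  · rintro hPS Φ (((hS | ⟨_, ⟨a, rfl⟩, hE⟩) | ⟨_, ⟨a, rfl⟩, hX⟩) | ⟨_, ⟨a, rfl⟩, hI⟩)
    · exact glob_bigModel_staticForms hS
    · exact glob_bigModel_effForms hE
    · exact glob_bigModel_exeForms hPS hX
    · exact glob_bigModel_inexForms hI

/-- Theorem 1: the big model is a model of the action theory
iff the theory satisfies Postulate PS. -/
theorem stmt_6 [Fintype Act] [Fintype α] (T : ActionTheory Act α) (dep : Dep Act α) :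
    (∀ Φ ∈ allForms T, Glob (bigModel T dep) Φ) ↔ PSstar T dep :=
  stmt_6_general T dep
end

section
/- Modularity for executabilities: if an action theory ⟨S, E, X, I⟩ satisfies Postulate PS*, then for any classical formula A and action a, S, E, X, I ⊨_⇝ A → ⟨a⟩⊤ if and only if S, X_a ⊨_⇝ A → ⟨a⟩⊤. -/
variable {Act α : Type}

/-!
Suppose `S ∪ X_a` has a `⇝`-model with a world `w` where `A` holds but `a` is not executable,
and let `v` be the valuation of `w`; then `v` satisfies `S` and falsifies every antecedent in
`X_a`. In any `⇝`-model of the whole theory, deleting the `a`-arrows leaving the worlds with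
valuation `v` yields another `⇝`-model of the theory: static, effect and inexecutability laws
survive the loss of arrows, and the only executability laws that could break are those of `X_a`,
whose antecedents fail at such worlds. If the whole theory entailed `A → ⟨a⟩⊤`, no `v`-world
could therefore exist in any of its `⇝`-models, so the theory would entail the negation of the
characteristic formula of `v` (here `α` is finite). By PS* this would be a classical consequence
of `S`, contradicting `v ⊨ S`.
-/

namespace PForm

theorem sat_toM_s12 (M : KModel Act α) (w : M.W) (φ : PForm α) :
    MForm.Sat M w (φ.toM : MForm Act α) ↔ φ.Sat (M.V w) := by
  induction φ <;> simp [PForm.toM, MForm.Sat, PForm.Sat, *]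

def conj_s12 : List (PForm α) → PForm α
  | [] => .not .fls
  | φ :: l => .and φ (conj_s12 l)

theorem sat_conj_s12 (v : α → Prop) (l : List (PForm α)) :
    (conj_s12 l).Sat v ↔ ∀ φ ∈ l, φ.Sat v := by
  induction l with
  | nil => simp [conj_s12, PForm.Sat]
  | cons φ l ih => simp [conj_s12, PForm.Sat, ih]

open Classical in
noncomputable def litOf (v : α → Prop) (p : α) : PForm α :=
  if v p then .atom p else .not (.atom p)

theorem sat_litOf (v v' : α → Prop) (p : α) : (litOf v p).Sat v' ↔ (v' p ↔ v p) := by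
  unfold litOf
  split_ifs with h <;> simp [PForm.Sat, h]

noncomputable def charForm_s12 [Fintype α] (v : α → Prop) : PForm α :=
  conj_s12 ((Finset.univ : Finset α).toList.map (litOf v))

theorem sat_charForm [Fintype α] (v v' : α → Prop) : (charForm_s12 v).Sat v' ↔ v' = v := by
  simp [charForm_s12, sat_conj_s12, sat_litOf, funext_iff]

end PForm

section Laws

variable (M : KModel Act α) (w : M.W) (a : Act)

open PForm

theorem sat_exeLaw (A : PForm α) :
    MForm.Sat M w (exeLaw a A) ↔ (A.Sat (M.V w) → ∃ w', M.R a w w') := by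
  simp [exeLaw, MForm.diam, MForm.Sat, sat_toM_s12]

theorem sat_effLaw (e : PForm α × PForm α) :
    MForm.Sat M w (effLaw a e) ↔
      (e.1.Sat (M.V w) → ∀ w', M.R a w w' → e.2.Sat (M.V w')) := by
  simp [effLaw, MForm.Sat, sat_toM_s12]

theorem sat_inexLaw (A : PForm α) :
    MForm.Sat M w (inexLaw a A) ↔ (A.Sat (M.V w) → ∀ w', ¬ M.R a w w') := by
  simp [inexLaw, MForm.Sat, sat_toM_s12]

end Laws

theorem ConsDep.mono {dep : Dep Act α} {Γ Δ : Set (MForm Act α)}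
    {Φ : MForm Act α} (hΓΔ : Γ ⊆ Δ) (h : ConsDep dep Γ Φ) : ConsDep dep Δ Φ :=
  fun M hM hΔ => h M hM fun Ψ hΨ => hΔ Ψ (hΓΔ hΨ)

theorem staticForms_union_exeForms_subset_allForms (T : ActionTheory Act α)
    (a : Act) : staticForms T ∪ exeForms T a ⊆ allForms T := by
  rintro Ψ (hΨ | hΨ)
  · exact Or.inl (Or.inl (Or.inl hΨ))
  · exact Or.inl (Or.inr (Set.mem_iUnion.2 ⟨a, hΨ⟩))

namespace KModel

def pruneAt (M : KModel Act α) (a : Act) (P : M.W → Prop) : KModel Act α where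
  W := M.W
  R b x y := M.R b x y ∧ ¬ (b = a ∧ P x)
  V := M.V

variable {M : KModel Act α} {a : Act} {P : M.W → Prop}

open PForm

theorem glob_allForms_pruneAt {T : ActionTheory Act α} (hM : ∀ Ψ ∈ allForms T, Glob M Ψ)
    (hX : ∀ x, P x → ∀ B ∈ T.X a, ¬ B.Sat (M.V x)) :
    ∀ Ψ ∈ allForms T, Glob (M.pruneAt a P) Ψ := by
  intro Ψ hΨ x
  have hMx := hM Ψ hΨ x
  rcases hΨ with ((hΨ | hΨ) | hΨ) | hΨ
  · obtain ⟨ψ, hψ, rfl⟩ := hΨ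
    exact (sat_toM_s12 _ x ψ).2 ((sat_toM_s12 M x ψ).1 hMx)
  · obtain ⟨b, e, he, rfl⟩ := Set.mem_iUnion.1 hΨ
    exact (sat_effLaw _ x b e).2 fun h1 y hxy => (sat_effLaw M x b e).1 hMx h1 y hxy.1
  · obtain ⟨b, B, hB, rfl⟩ := Set.mem_iUnion.1 hΨ
    refine (sat_exeLaw _ x b B).2 fun hBx => ?_
    by_cases hpruned : b = a ∧ P x
    · obtain ⟨rfl, hPx⟩ := hpruned
      exact absurd hBx (hX x hPx B hB)
    · obtain ⟨y, hxy⟩ := (sat_exeLaw M x b B).1 hMx hBx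
      exact ⟨y, hxy, hpruned⟩
  · obtain ⟨b, B, hB, rfl⟩ := Set.mem_iUnion.1 hΨ
    exact (sat_inexLaw _ x b B).2 fun hBx y hxy => (sat_inexLaw M x b B).1 hMx hBx y hxy.1

end KModel

theorem IsDepModel.pruneAt {dep : Dep Act α} {M : KModel Act α} (hM : IsDepModel dep M)
    (a : Act) (P : M.W → Prop) : IsDepModel dep (M.pruneAt a P) :=
  fun b x y hxy p => hM b x y hxy.1 p

open PForm in
theorem consDep_not_charForm_of_consDep_exeLaw [Fintype α]
    {T : ActionTheory Act α} {dep : Dep Act α} {a : Act} {A : PForm α}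
    (h : ConsDep dep (allForms T) (exeLaw a A)) {v : α → Prop} (hA : A.Sat v)
    (hX : ∀ B ∈ T.X a, ¬ B.Sat v) :
    ConsDep dep (allForms T) (PForm.not (charForm_s12 v)).toM := by
  intro N hN hNT u
  rw [sat_toM_s12]
  intro hu
  rw [sat_charForm] at hu
  have hN' := KModel.glob_allForms_pruneAt (P := fun x => N.V x = v) hNT
    fun x hx => hx ▸ hX
  obtain ⟨y, hy⟩ := (sat_exeLaw (N.pruneAt a _) u a A).1 (h _ (hN.pruneAt a _) hN' u) (hu ▸ hA)
  exact hy.2 ⟨rfl, hu⟩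

theorem stmt_12_general [Fintype α] (T : ActionTheory Act α) (dep : Dep Act α)
    (hPS : PSstar T dep) (a : Act) (A : PForm α) :
    ConsDep dep (allForms T) (exeLaw a A) ↔
    ConsDep dep (staticForms T ∪ exeForms T a) (exeLaw a A) := by
  refine ⟨fun h M hM hMT w => ?_, ConsDep.mono (staticForms_union_exeForms_subset_allForms T a)⟩
  rw [sat_exeLaw]
  intro hA
  by_contra! hstuck
  have hS : ∀ ψ ∈ T.S, ψ.Sat (M.V w) := fun ψ hψ =>
    (PForm.sat_toM_s12 M w ψ).1 (hMT _ (Or.inl ⟨ψ, hψ, rfl⟩) w)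
  have hX : ∀ B ∈ T.X a, ¬ B.Sat (M.V w) := fun B hB hBw =>
    let ⟨y, hy⟩ := (sat_exeLaw M w a B).1 (hMT _ (Or.inr ⟨B, hB, rfl⟩) w) hBw
    hstuck y hy
  exact hPS _ (consDep_not_charForm_of_consDep_exeLaw h hA hX) _ hS ((PForm.sat_charForm _ _).2 rfl)

/-- modularity for executabilities: under PS*, deducing an
executability law for `a` only needs `S` and `X_a`. -/
theorem stmt_12 [Fintype Act] [Fintype α] (T : ActionTheory Act α) (dep : Dep Act α)
    (hPS : PSstar T dep) (a : Act) (A : PForm α) :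
    ConsDep dep (allForms T) (exeLaw a A) ↔
    ConsDep dep (staticForms T ∪ exeForms T a) (exeLaw a A) :=
  stmt_12_general T dep hPS a A
end
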